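/- arXiv:2207.02664 — 2 statements merged into one kernel-verified Lean document; each statement's English description precedes it below -/
import Mathlib

section
/- Let L be the normalized Laplacian of a signed hypergraph, let g be an eigenfunction of L with Lg = λg, and let D(g) be the diagonal matrix with D(g)_{xx} = g(x). Then for any function f : V → ℝ, ⟨f, D(g)(L − λI)D(g)f⟩ = Σ_{x,y ∈ e ∈ E} deg(x)(−L_{xy}) g(x)g(y)(f(x)−f(y))², where ⟨·,·⟩ is the degree-weighted inner product. -/
attribute [local instance] Classical.propDecidable

open Finset Matrix

/-! ## Signed hypergraphs (edges indexed by a type `E`; `sign v e ∈ {0, 1, -1}`,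
nonzero exactly on incidences) -/

structure SignedHypergraph (V E : Type) where
  sign : V → E → ℝ
  sign_values : ∀ v e, sign v e = 0 ∨ sign v e = 1 ∨ sign v e = -1

namespace SignedHypergraph

variable {V E : Type} [Fintype V] [Fintype E] [DecidableEq V] [DecidableEq E]

/-- The vertex set of an edge. -/
noncomputable def edgeVerts (G : SignedHypergraph V E) (e : E) : Finset V :=
  Finset.univ.filter fun v => G.sign v e ≠ 0

/-- The degree of a vertex. -/
noncomputable def deg (G : SignedHypergraph V E) (v : V) : ℕ :=
  (Finset.univ.filter fun e : E => G.sign v e ≠ 0).card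

/-- The sign of an edge: `sgn e = (-1)^(|e|-1) ∏_{v ∈ e} σ(v,e)`. -/
noncomputable def edgeSign (G : SignedHypergraph V E) (e : E) : ℝ :=
  (-1 : ℝ) ^ ((G.edgeVerts e).card - 1) * ∏ v ∈ G.edgeVerts e, G.sign v e

/-- The signed adjacency matrix. -/
noncomputable def adj (G : SignedHypergraph V E) : Matrix V V ℝ :=
  Matrix.of fun x y =>
    if x = y then 0
    else ∑ e ∈ Finset.univ.filter (fun e : E => G.sign x e ≠ 0 ∧ G.sign y e ≠ 0), G.edgeSign e

/-- The normalized Laplacian `L = I - D⁻¹ A`. -/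
noncomputable def lap (G : SignedHypergraph V E) : Matrix V V ℝ :=
  Matrix.of fun x y => (if x = y then (1 : ℝ) else 0) - G.adj x y / (G.deg x : ℝ)

/-- The degree-weighted inner product `⟨f, g⟩ = ∑ v deg(v) f(v) g(v)`. -/
noncomputable def dInner (G : SignedHypergraph V E) (f g : V → ℝ) : ℝ :=
  ∑ v : V, (G.deg v : ℝ) * f v * g v

/-- Two vertices share an edge. -/
def Adjacent (G : SignedHypergraph V E) (x y : V) : Prop :=
  ∃ e : E, G.sign x e ≠ 0 ∧ G.sign y e ≠ 0

/-- The underlying hypergraph is connected. -/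
def Connected (G : SignedHypergraph V E) : Prop :=
  ∀ x y : V, Relation.ReflTransGen G.Adjacent x y

/-- One step of a strong nodal domain path: `x, y` in a common edge `e` with
`f x · sgn e · f y > 0`. -/
def sStep (G : SignedHypergraph V E) (f : V → ℝ) (x y : V) : Prop :=
  ∃ e : E, G.sign x e ≠ 0 ∧ G.sign y e ≠ 0 ∧ 0 < f x * G.edgeSign e * f y

/-- The number `𝔖(f)` of strong nodal domains: equivalence classes of the support of `f`
under joining by S-paths. -/
noncomputable def strongDomainCount (G : SignedHypergraph V E) (f : V → ℝ) : ℕ :=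
  Set.ncard {D : Set V | ∃ w, f w ≠ 0 ∧ D = {x | Relation.ReflTransGen (G.sStep f) w x}}

/-- A weak nodal domain path: a walk along edges such that any two consecutive nonzeros
`v i`, `v j` of `f` (joined through zeros by the edges `e i, …, e (j-1)`) satisfy
`f (v i) · sgn (e i) ⋯ sgn (e (j-1)) · f (v j) > 0`. -/
def IsWPath (G : SignedHypergraph V E) (f : V → ℝ) {ℓ : ℕ}
    (v : Fin (ℓ + 1) → V) (e : Fin ℓ → E) : Prop :=
  (∀ t : Fin ℓ, G.sign (v t.castSucc) (e t) ≠ 0 ∧ G.sign (v t.succ) (e t) ≠ 0) ∧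
  ∀ i j : Fin (ℓ + 1), i < j → f (v i) ≠ 0 → f (v j) ≠ 0 →
    (∀ k : Fin (ℓ + 1), i < k → k < j → f (v k) = 0) →
    0 < f (v i) *
        (∏ t : Fin ℓ, if (i : ℕ) ≤ (t : ℕ) ∧ (t : ℕ) < (j : ℕ) then G.edgeSign (e t) else 1) *
        f (v j)

/-- `x` and `y` are joined by a W-path (or equal). -/
def wRel (G : SignedHypergraph V E) (f : V → ℝ) (x y : V) : Prop :=
  x = y ∨ ∃ (ℓ : ℕ) (v : Fin (ℓ + 1) → V) (e : Fin ℓ → E),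
    G.IsWPath f v e ∧ v 0 = x ∧ v (Fin.last ℓ) = y

/-- The weak nodal domain of a vertex `w` in the support of `f`: the equivalence class
of `w` under the W-path relation on the support, enlarged by the zero vertices
W-path-connected to it. -/
def weakDomain (G : SignedHypergraph V E) (f : V → ℝ) (w : V) : Set V :=
  {x | ∃ y, f y ≠ 0 ∧ G.wRel f w y ∧ G.wRel f x y}

def IsWeakNodalDomain (G : SignedHypergraph V E) (f : V → ℝ) (D : Set V) : Prop :=
  ∃ w, f w ≠ 0 ∧ D = G.weakDomain f w

/-- The number `𝔚(f)` of weak nodal domains. -/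
noncomputable def weakDomainCount (G : SignedHypergraph V E) (f : V → ℝ) : ℕ :=
  Set.ncard {D : Set V | G.IsWeakNodalDomain f D}

/-- The number of connected components of the subhypergraph induced on the vertex set `A`
with edges restricted to those satisfying `P`. -/
noncomputable def componentsOn (G : SignedHypergraph V E) (A : Finset V) (P : E → Prop) : ℕ :=
  Set.ncard {C : Set V | ∃ v ∈ A, C =
    {u | u ∈ A ∧ Relation.ReflTransGen
      (fun x y => x ∈ A ∧ y ∈ A ∧ ∃ e, P e ∧ G.sign x e ≠ 0 ∧ G.sign y e ≠ 0) v u}}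

/-- The cyclomatic number `l = ∑_e (|e|-1) - |V| + c` of the subhypergraph induced on `A`
with edges restricted to those satisfying `P`. -/
noncomputable def cyclomaticOn (G : SignedHypergraph V E) (A : Finset V) (P : E → Prop) : ℤ :=
  (∑ e ∈ Finset.univ.filter (fun e : E => P e ∧ (G.edgeVerts e ∩ A).Nonempty),
      (((G.edgeVerts e ∩ A).card : ℤ) - 1)) -
    (A.card : ℤ) + (G.componentsOn A P : ℤ)

/-- An edge all of whose pairs of (distinct) vertices `x, y` satisfy
`f x · sgn e · f y > 0`. -/
def posEdge (G : SignedHypergraph V E) (f : V → ℝ) (e : E) : Prop :=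
  ∀ x y : V, G.sign x e ≠ 0 → G.sign y e ≠ 0 → x ≠ y → 0 < f x * G.edgeSign e * f y

/-- An edge of the subhypergraph `S` on the support of `f`. -/
def sEdge (G : SignedHypergraph V E) (f : V → ℝ) (e : E) : Prop :=
  (∀ v, G.sign v e ≠ 0 → f v ≠ 0) ∧ G.posEdge f e

/-- The subhypergraph with edge set `P` contains a cycle. -/
def HasCycle (G : SignedHypergraph V E) (P : E → Prop) : Prop :=
  ∃ (q : ℕ) (v : Fin (q + 1) → V) (e : Fin q → E), 2 ≤ q ∧
    Function.Injective (fun t : Fin q => v t.castSucc) ∧ Function.Injective e ∧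
    v (Fin.last q) = v 0 ∧
    ∀ t : Fin q, P (e t) ∧ G.sign (v t.castSucc) (e t) ≠ 0 ∧ G.sign (v t.succ) (e t) ≠ 0

/-- A tree-like vertex: its removal increases the number of connected components
by `deg x - 1`. -/
def Treelike (G : SignedHypergraph V E) (x : V) : Prop :=
  (G.componentsOn (Finset.univ.erase x) (fun _ => True) : ℤ) =
    (G.componentsOn Finset.univ (fun _ => True) : ℤ) + (G.deg x : ℤ) - 1

/-- The Fiedler zero set of `f`: zeros `x` of `f` such that either all vertices sharing an
edge with `x` are zeros, or `x` is not tree-like. -/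
def fiedlerSet (G : SignedHypergraph V E) (f : V → ℝ) : Set V :=
  {x | f x = 0 ∧ ((∀ y, G.Adjacent x y → f y = 0) ∨ ¬ G.Treelike x)}

/-- Weak deletion of the vertices in `R`: each vertex of `R` is removed from every hyperedge
(possibly creating empty edges). -/
def weakDelete (G : SignedHypergraph V E) (R : Finset V) :
    SignedHypergraph {v : V // v ∉ R} E :=
  ⟨fun v e => G.sign v.1 e, fun v e => G.sign_values v.1 e⟩

end SignedHypergraph

/-! ## Plain hypergraphs -/

structure PlainHypergraph (V : Type) where
  verts : Finset V
  edges : Finset (Finset V)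
  edge_subset : ∀ e ∈ edges, e ⊆ verts

namespace PlainHypergraph

variable {V : Type} [DecidableEq V]

def Adjacent (H : PlainHypergraph V) (x y : V) : Prop := ∃ e ∈ H.edges, x ∈ e ∧ y ∈ e

def Connected (H : PlainHypergraph V) : Prop :=
  ∀ x ∈ H.verts, ∀ y ∈ H.verts, Relation.ReflTransGen H.Adjacent x y

/-- A cycle: an alternating closed sequence of distinct vertices and distinct edges
`v 0, e 0, v 1, e 1, …, v q = v 0` of length `q ≥ 2` with `v t, v (t+1) ∈ e t`. -/
def IsCycle (H : PlainHypergraph V) {q : ℕ} (v : Fin (q + 1) → V) (e : Fin q → Finset V) : Prop :=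
  2 ≤ q ∧ Function.Injective (fun t : Fin q => v t.castSucc) ∧ Function.Injective e ∧
    v (Fin.last q) = v 0 ∧
    ∀ t : Fin q, e t ∈ H.edges ∧ v t.castSucc ∈ e t ∧ v t.succ ∈ e t

def Acyclic (H : PlainHypergraph V) : Prop :=
  ¬ ∃ (q : ℕ) (v : Fin (q + 1) → V) (e : Fin q → Finset V), H.IsCycle v e

/-- The number of connected components. -/
noncomputable def ncomp (H : PlainHypergraph V) : ℕ :=
  Set.ncard {C : Set V | ∃ v ∈ H.verts, C = {u | Relation.ReflTransGen H.Adjacent v u}}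

/-- The cyclomatic number `l(H) = ∑_e (|e|-1) - |V| + c(H)`. -/
noncomputable def cyclomatic (H : PlainHypergraph V) : ℤ :=
  (∑ e ∈ H.edges, ((e.card : ℤ) - 1)) - (H.verts.card : ℤ) + (H.ncomp : ℤ)

def degree (H : PlainHypergraph V) (x : V) : ℕ := (H.edges.filter fun e => x ∈ e).card

/-- The subhypergraph induced by a vertex set `A`: edges `e ∩ A` for `e ∩ A ≠ ∅`. -/
def induced (H : PlainHypergraph V) (A : Finset V) : PlainHypergraph V where
  verts := H.verts ∩ A
  edges := (H.edges.filter fun e => (e ∩ A).Nonempty).image fun e => e ∩ A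
  edge_subset := by
    intro e' he'
    simp only [Finset.mem_image, Finset.mem_filter] at he'
    obtain ⟨e, ⟨heE, -⟩, rfl⟩ := he'
    intro x hx
    rcases Finset.mem_inter.mp hx with ⟨hxe, hxA⟩
    exact Finset.mem_inter.mpr ⟨H.edge_subset e heE hxe, hxA⟩

/-- A tree-like vertex: deleting it (induced subhypergraph on the remaining vertices)
increases the number of connected components by `deg x - 1`. -/
def Treelike (H : PlainHypergraph V) (x : V) : Prop :=
  ((H.induced (H.verts.erase x)).ncomp : ℤ) = (H.ncomp : ℤ) + (H.degree x : ℤ) - 1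

/-- Removal of a vertex together with all edges incident to it. -/
def deleteVert (H : PlainHypergraph V) (y : V) : PlainHypergraph V where
  verts := H.verts.erase y
  edges := H.edges.filter fun e => y ∉ e
  edge_subset := by
    intro e he
    rcases Finset.mem_filter.mp he with ⟨heE, hy⟩
    intro x hx
    exact Finset.mem_erase.mpr ⟨fun h => hy (h ▸ hx), H.edge_subset e heE hx⟩

/-- A spanning hyperforest of `H`: a maximal acyclic spanning subhypergraph. -/
def IsSpanningHyperforest (H T : PlainHypergraph V) : Prop :=
  T.verts = H.verts ∧ T.edges ⊆ H.edges ∧ T.Acyclic ∧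
    ∀ T' : PlainHypergraph V, T'.verts = H.verts → T'.edges ⊆ H.edges → T'.Acyclic →
      T.edges ⊆ T'.edges → T'.edges = T.edges

end PlainHypergraph

/-- The positive index of inertia of a real matrix: the number of positive roots of its
characteristic polynomial, counted with multiplicity. -/
noncomputable def posInertia {m : Type} [Fintype m] [DecidableEq m] (M : Matrix m m ℝ) : ℕ :=
  (M.charpoly.roots.filter fun x => 0 < x).card

/-- The bordered matrix `[[B, a], [aᵀ, b]]`. -/
def borderMatrix {n : ℕ} (B : Matrix (Fin n) (Fin n) ℝ) (a : Fin n → ℝ) (b : ℝ) :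
    Matrix (Fin n ⊕ Unit) (Fin n ⊕ Unit) ℝ :=
  Matrix.fromBlocks B (Matrix.of fun i _ => a i) (Matrix.of fun _ j => a j)
    (Matrix.of fun _ _ => b)


/-! Put `B = D(g) · Deg · (L - λI) · D(g)`. Since `Deg · L = Deg - A` is symmetric, so is `B`,
and the eigen-equation `(L - λI) g = 0` says exactly that the rows of `B` sum to zero. For a
symmetric matrix with zero row sums, `fᵀ B f = -½ ∑ₓ ∑ᵧ B x y (f x - f y)²`, and off the diagonal
`-B x y = deg x · (-L x y) · g x · g y`. -/

namespace Matrix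

variable {n R : Type} [Fintype n] [CommRing R]

theorem IsSymm.two_mul_dotProduct_mulVec_of_mulVec_one_eq_zero {B : Matrix n n R}
    (hB : B.IsSymm) (hrow : B *ᵥ 1 = 0) (f : n → R) :
    2 * (f ⬝ᵥ B *ᵥ f) = -∑ x, ∑ y, B x y * (f x - f y) ^ 2 := by
  have hrow' : ∀ x, ∑ y, B x y = 0 := fun x => by
    simpa [mulVec, dotProduct] using congrFun hrow x
  have hsq_left : ∑ x, ∑ y, B x y * f x ^ 2 = 0 := by
    simp [← Finset.sum_mul, hrow']
  have hsq_right : ∑ x, ∑ y, B x y * f y ^ 2 = 0 := by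
    rw [Finset.sum_comm]
    simp [← Finset.sum_mul, ← hB.apply, hrow']
  have hexpand : ∀ x y, B x y * (f x - f y) ^ 2 =
      B x y * f x ^ 2 + B x y * f y ^ 2 - 2 * (f x * (B x y * f y)) := fun x y => by ring
  simp only [hexpand, Finset.sum_add_distrib, Finset.sum_sub_distrib, hsq_left, hsq_right,
    ← Finset.mul_sum]
  simp [dotProduct, mulVec, Finset.mul_sum]

end Matrix

namespace SignedHypergraph

variable {V E : Type} [Fintype V] [Fintype E] [DecidableEq V] (G : SignedHypergraph V E)

theorem adj_isSymm : G.adj.IsSymm := by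
  ext x y
  by_cases hxy : x = y
  · subst hxy; rfl
  · simp only [transpose_apply, adj, of_apply, if_neg hxy, if_neg (Ne.symm hxy), and_comm]

theorem adj_eq_zero_of_deg_eq_zero {x : V} (hx : G.deg x = 0) (y : V) : G.adj x y = 0 := by
  have hsign : ∀ e, G.sign x e = 0 := by
    simpa [deg, Finset.filter_eq_empty_iff] using hx
  by_cases hxy : x = y <;> simp [adj, hxy, hsign]

theorem diagonal_deg_mul_lap :
    diagonal (fun x => (G.deg x : ℝ)) * G.lap = diagonal (fun x => (G.deg x : ℝ)) - G.adj := by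
  ext x y
  rw [diagonal_mul, Matrix.sub_apply, diagonal_apply]
  by_cases hx : G.deg x = 0
  · simp [lap, hx, adj_eq_zero_of_deg_eq_zero]
  · have : (G.deg x : ℝ) ≠ 0 := by exact_mod_cast hx
    simp only [lap, of_apply]
    field_simp
    split_ifs with hxy
    · subst hxy; ring
    · ring

theorem isSymm_diagonal_deg_mul_lap_sub_smul_one (lam : ℝ) :
    (diagonal (fun x => (G.deg x : ℝ)) * (G.lap - lam • 1)).IsSymm := by
  rw [mul_sub, G.diagonal_deg_mul_lap, mul_smul_comm, mul_one]
  exact ((isSymm_diagonal _).sub G.adj_isSymm).sub ((isSymm_diagonal _).smul lam)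

theorem dInner_eq_dotProduct (f h : V → ℝ) :
    G.dInner f h = f ⬝ᵥ diagonal (fun x => (G.deg x : ℝ)) *ᵥ h := by
  simp only [dInner, dotProduct, mulVec_diagonal]
  exact Finset.sum_congr rfl fun x _ => by ring

end SignedHypergraph

variable {V E : Type} [Fintype V] [Fintype E] [DecidableEq V] [DecidableEq E]

theorem stmt1_general (G : SignedHypergraph V E) (lam : ℝ) (g : V → ℝ)
    (hge : G.lap.mulVec g = lam • g) (f : V → ℝ) :
    G.dInner f
        ((Matrix.diagonal g * (G.lap - lam • (1 : Matrix V V ℝ)) * Matrix.diagonal g).mulVec f) =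
      (1 / 2) * ∑ x : V, ∑ y : V,
        (G.deg x : ℝ) * (-(G.lap x y)) * g x * g y * (f x - f y) ^ 2 := by
  set D := diagonal fun x => (G.deg x : ℝ)
  set B := diagonal g * (D * (G.lap - lam • 1)) * diagonal g
  have hS : (D * (G.lap - lam • 1)).IsSymm := G.isSymm_diagonal_deg_mul_lap_sub_smul_one lam
  have hB : B.IsSymm := IsSymm.ext fun x y => by
    simp only [B, mul_diagonal, diagonal_mul, hS.apply]
    ring
  have hrow : B *ᵥ 1 = 0 := by
    have hg1 : diagonal g *ᵥ 1 = g := by ext; simp [mulVec_diagonal]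
    simp only [B, ← mulVec_mulVec, hg1, sub_mulVec, smul_mulVec, one_mulVec, hge, sub_self,
      mulVec_zero]
  have hLHS : G.dInner f ((diagonal g * (G.lap - lam • 1) * diagonal g) *ᵥ f) = f ⬝ᵥ B *ᵥ f := by
    rw [G.dInner_eq_dotProduct, mulVec_mulVec]
    congr 2
    simp only [B, D, ← Matrix.mul_assoc, diagonal_mul_diagonal, mul_comm]
  have hterm : ∀ x y, (G.deg x : ℝ) * -G.lap x y * g x * g y * (f x - f y) ^ 2 =
      -(B x y * (f x - f y) ^ 2) := by
    intro x y
    by_cases hxy : x = y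
    · simp [hxy]
    · simp only [B, D, mul_diagonal, diagonal_mul, Matrix.sub_apply, Matrix.smul_apply,
        one_apply_ne hxy, smul_zero, sub_zero]
      ring
  simp only [hLHS, hterm, Finset.sum_neg_distrib]
  linear_combination (1 / 2 : ℝ) * hB.two_mul_dotProduct_mulVec_of_mulVec_one_eq_zero hrow f

theorem stmt1 (G : SignedHypergraph V E) (lam : ℝ) (g : V → ℝ) (hg : g ≠ 0)
    (hge : G.lap.mulVec g = lam • g) (f : V → ℝ) :
    G.dInner f
        ((Matrix.diagonal g * (G.lap - lam • (1 : Matrix V V ℝ)) * Matrix.diagonal g).mulVec f) =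
      (1 / 2) * ∑ x : V, ∑ y : V,
        (G.deg x : ℝ) * (-(G.lap x y)) * g x * g y * (f x - f y) ^ 2 :=
  stmt1_general G lam g hge f
end

section
/- Let f be a nonzero function on a signed hypergraph Γ=(H,σ) and suppose a vertex x lies in two distinct weak nodal domains D and D′ of f. Then every vertex y sharing an edge with x lies in D ∪ D′; in particular the neighborhood S_1(x) = {y : y ∼ x} is contained in D ∪ D′. -/
attribute [local instance] Classical.propDecidable

open Finset Matrix

/-!
A W-path is the same thing as a walk carrying a *gauge*: a nonzero real at each vertex, multiplied
by a positive multiple of `sgn e` across each edge `e`, such that `f` never has the sign opposite to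
the gauge. Walks with gauges are chains of a symmetric step relation on `V × ℝ`, which can be
reversed, rescaled by positive constants and concatenated whenever the gauges at the junction have
the same sign.

If `x` lies in two weak nodal domains, then `f x = 0`, and gauged walks from `x` into the two
domains start with gauges `ε`, `ε'` of opposite signs, since otherwise they would glue. A neighbour
`y` of `x` through `e` can be prepended with gauge `ε · sgn e` or `ε' · sgn e` unless `f y` has the
wrong sign for both, which would force `ε` and `ε'` to have the same sign.
-/

theorem mul_pos_of_mul_pos_of_mul_pos {a b c : ℝ} (hab : 0 < a * b) (hbc : 0 < b * c) :
    0 < a * c := by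
  have hb : 0 < b * b := mul_self_pos.2 (right_ne_zero_of_mul hab.ne')
  refine pos_of_mul_pos_left (b := b * b) ?_ hb.le
  calc 0 < (a * b) * (b * c) := mul_pos hab hbc
    _ = a * c * (b * b) := by ring

theorem mul_nonneg_of_forall_consecutive {ι : Type*} [LinearOrder ι] [LocallyFiniteOrder ι]
    {h : ι → ℝ}
    (H : ∀ i j, i < j → h i ≠ 0 → h j ≠ 0 → (∀ k, i < k → k < j → h k = 0) → 0 < h i * h j)
    (i j : ι) : 0 ≤ h i * h j := by
  have key : ∀ n i j, (Finset.Ioo i j).card = n → i < j → h i ≠ 0 → h j ≠ 0 →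
      0 < h i * h j := by
    intro n
    induction n using Nat.strong_induction_on with
    | _ n ih =>
      intro i j hn hij hi hj
      by_cases hz : ∀ k, i < k → k < j → h k = 0
      · exact H i j hij hi hj hz
      push Not at hz
      obtain ⟨k, hik, hkj, hk⟩ := hz
      have hkmem : k ∈ Finset.Ioo i j := Finset.mem_Ioo.2 ⟨hik, hkj⟩
      have hleft : (Finset.Ioo i k).card < n := hn ▸ Finset.card_lt_card
        ⟨Finset.Ioo_subset_Ioo_right hkj.le, fun hsub => by simpa using hsub hkmem⟩
      have hright : (Finset.Ioo k j).card < n := hn ▸ Finset.card_lt_card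
        ⟨Finset.Ioo_subset_Ioo_left hik.le, fun hsub => by simpa using hsub hkmem⟩
      exact mul_pos_of_mul_pos_of_mul_pos (ih _ hleft i k rfl hik hi hk)
        (ih _ hright k j rfl hkj hk hj)
  rcases eq_or_ne (h i) 0 with hi | hi
  · simp [hi]
  rcases eq_or_ne (h j) 0 with hj | hj
  · simp [hj]
  rcases lt_trichotomy i j with hij | rfl | hij
  · exact (key _ i j rfl hij hi hj).le
  · exact mul_self_nonneg _
  · exact mul_comm (h i) (h j) ▸ (key _ j i rfl hij hj hi).le

namespace SignedHypergraph

variable {V E : Type}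

def Admissible (f : V → ℝ) (p : V × ℝ) : Prop :=
  p.2 ≠ 0 ∧ 0 ≤ f p.1 * p.2

theorem Admissible.mul_pos {f : V → ℝ} {p : V × ℝ} (hp : Admissible f p) (hf : f p.1 ≠ 0) :
    0 < f p.1 * p.2 :=
  hp.2.lt_of_ne (mul_ne_zero hf hp.1).symm

variable [Fintype V] (G : SignedHypergraph V E) (f : V → ℝ)

theorem edgeSign_ne_zero (e : E) : G.edgeSign e ≠ 0 :=
  mul_ne_zero (pow_ne_zero _ (by norm_num))
    (Finset.prod_ne_zero_iff.2 fun _ hv => (Finset.mem_filter.1 hv).2)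

noncomputable def pathSign {ℓ : ℕ} (e : Fin ℓ → E) (n : ℕ) : ℝ :=
  ∏ t : Fin ℓ, if (t : ℕ) < n then G.edgeSign (e t) else 1

section pathSign

variable {G} {ℓ : ℕ} (e : Fin ℓ → E)

theorem pathSign_ne_zero (n : ℕ) : G.pathSign e n ≠ 0 :=
  Finset.prod_ne_zero_iff.2 fun t _ => by
    split_ifs
    exacts [G.edgeSign_ne_zero _, one_ne_zero]

theorem prod_Ico_mul_pathSign {i j : ℕ} (hij : i ≤ j) :
    (∏ t : Fin ℓ, if i ≤ (t : ℕ) ∧ (t : ℕ) < j then G.edgeSign (e t) else 1) *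
      G.pathSign e i = G.pathSign e j := by
  rw [pathSign, pathSign, ← Finset.prod_mul_distrib]
  refine Finset.prod_congr rfl fun t _ => ?_
  split_ifs <;> first | omega | simp

theorem pathSign_succ (t : Fin ℓ) :
    G.pathSign e (t + 1) = G.pathSign e t * G.edgeSign (e t) := by
  rw [← prod_Ico_mul_pathSign e (Nat.le_succ t), mul_comm, Finset.prod_eq_single t]
  · simp
  · intro u _ hut
    rw [if_neg]
    have : (u : ℕ) ≠ t := Fin.val_ne_of_ne hut
    omega
  · simp

theorem mul_prod_Ico_mul_pos_iff {i j : ℕ} (hij : i ≤ j) (a b : ℝ) :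
    0 < a * (∏ t : Fin ℓ, if i ≤ (t : ℕ) ∧ (t : ℕ) < j then G.edgeSign (e t) else 1) * b ↔
      0 < a * G.pathSign e i * (b * G.pathSign e j) := by
  rw [← prod_Ico_mul_pathSign e hij]
  have hsq : 0 < G.pathSign e i * G.pathSign e i := mul_self_pos.2 (pathSign_ne_zero e i)
  rw [← mul_pos_iff_of_pos_right hsq]
  ring_nf

end pathSign

def IsGaugedWalk {ℓ : ℕ} (v : Fin (ℓ + 1) → V) (e : Fin ℓ → E) (g : Fin (ℓ + 1) → ℝ) : Prop :=
  (∀ t : Fin ℓ, G.sign (v t.castSucc) (e t) ≠ 0 ∧ G.sign (v t.succ) (e t) ≠ 0 ∧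
      0 < g t.castSucc * G.edgeSign (e t) * g t.succ) ∧
    ∀ i, Admissible f (v i, g i)

variable {G f}

theorem exists_isGaugedWalk_of_isWPath {ℓ : ℕ} {v : Fin (ℓ + 1) → V} {e : Fin ℓ → E}
    (hp : G.IsWPath f v e) : ∃ g, G.IsGaugedWalk f v e g := by
  obtain ⟨hadj, hsign⟩ := hp
  set h : Fin (ℓ + 1) → ℝ := fun i => f (v i) * G.pathSign e i
  have hcoh : ∀ i j, 0 ≤ h i * h j := mul_nonneg_of_forall_consecutive fun i j hij hi hj hz =>
    (mul_prod_Ico_mul_pos_iff e hij.le _ _).1 <| hsign i j hij (left_ne_zero_of_mul hi)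
      (left_ne_zero_of_mul hj) fun k hik hkj =>
        (mul_eq_zero.1 (hz k hik hkj)).resolve_right (pathSign_ne_zero e k)
  obtain ⟨σ, hσ, hσh⟩ : ∃ σ ≠ 0, ∀ i, 0 ≤ σ * h i := by
    by_cases hex : ∃ k, h k ≠ 0
    · obtain ⟨k, hk⟩ := hex
      exact ⟨h k, hk, hcoh k⟩
    · push Not at hex
      exact ⟨1, one_ne_zero, fun i => by simp [hex i]⟩
  refine ⟨fun i => σ * G.pathSign e i, fun t => ⟨(hadj t).1, (hadj t).2, ?_⟩,
    fun i => ⟨mul_ne_zero hσ (pathSign_ne_zero e i), ?_⟩⟩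
  · have hne : σ * G.pathSign e t * G.edgeSign (e t) ≠ 0 :=
      mul_ne_zero (mul_ne_zero hσ (pathSign_ne_zero e t)) (G.edgeSign_ne_zero _)
    calc 0 < (σ * G.pathSign e t * G.edgeSign (e t)) * (σ * G.pathSign e t * G.edgeSign (e t)) :=
          mul_self_pos.2 hne
      _ = _ := by simp only [Fin.val_castSucc, Fin.val_succ, pathSign_succ]; ring
  · calc 0 ≤ σ * h i := hσh i
      _ = _ := by simp only [h]; ring

theorem isWPath_of_isGaugedWalk {ℓ : ℕ} {v : Fin (ℓ + 1) → V} {e : Fin ℓ → E}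
    {g : Fin (ℓ + 1) → ℝ} (hg : G.IsGaugedWalk f v e g) : G.IsWPath f v e := by
  obtain ⟨hstep, hadm⟩ := hg
  refine ⟨fun t => ⟨(hstep t).1, (hstep t).2.1⟩, fun i j hij hfi hfj _ => ?_⟩
  -- `g · pathSign` never changes sign along the walk
  set a : Fin (ℓ + 1) → ℝ := fun i => g i * G.pathSign e i
  have ha : ∀ i, 0 < a 0 * a i := by
    intro i
    induction i using Fin.induction with
    | zero => exact mul_self_pos.2 (mul_ne_zero (hadm 0).1 (pathSign_ne_zero e 0))
    | succ t ih =>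
      refine mul_pos_of_mul_pos_of_mul_pos ih ?_
      have hsq := mul_self_pos.2 (pathSign_ne_zero (G := G) e t)
      calc 0 < g t.castSucc * G.edgeSign (e t) * g t.succ * (G.pathSign e t * G.pathSign e t) :=
            mul_pos (hstep t).2.2 hsq
        _ = _ := by simp only [a, Fin.val_castSucc, Fin.val_succ, pathSign_succ]; ring
  have haij : 0 < a i * a j := mul_pos_of_mul_pos_of_mul_pos (mul_comm (a 0) _ ▸ ha i) (ha j)
  have hgi := mul_self_pos.2 (hadm i).1
  have hgj := mul_self_pos.2 (hadm j).1
  rw [mul_prod_Ico_mul_pos_iff e hij.le]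
  refine pos_of_mul_pos_left (b := g i * g i * (g j * g j)) ?_ (mul_pos hgi hgj).le
  calc 0 < f (v i) * g i * (a i * a j) * (f (v j) * g j) :=
        mul_pos (mul_pos ((hadm i).mul_pos hfi) haij) ((hadm j).mul_pos hfj)
    _ = _ := by simp only [a]; ring

variable (G f) in
def GaugeStep (p q : V × ℝ) : Prop :=
  Admissible f p ∧ Admissible f q ∧
    ∃ e, G.sign p.1 e ≠ 0 ∧ G.sign q.1 e ≠ 0 ∧ 0 < p.2 * G.edgeSign e * q.2

instance : Std.Symm (G.GaugeStep f) where
  symm _ _ := fun ⟨hp, hq, e, hpe, hqe, hpos⟩ =>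
    ⟨hq, hp, e, hqe, hpe, by convert hpos using 1; ring⟩

theorem Admissible.of_reflTransGen {p q : V × ℝ} (hp : Admissible f p)
    (h : Relation.ReflTransGen (G.GaugeStep f) p q) : Admissible f q := by
  induction h with
  | refl => exact hp
  | tail _ hstep _ => exact hstep.2.1

theorem reflTransGen_gaugeStep_smul {c : ℝ} (hc : 0 < c) {p q : V × ℝ}
    (h : Relation.ReflTransGen (G.GaugeStep f) p q) :
    Relation.ReflTransGen (G.GaugeStep f) (p.1, c * p.2) (q.1, c * q.2) := by
  have hadm : ∀ {r : V × ℝ}, Admissible f r → Admissible f (r.1, c * r.2) := fun ⟨hr0, hr⟩ =>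
    ⟨mul_ne_zero hc.ne' hr0, by simpa [mul_left_comm] using mul_nonneg hc.le hr⟩
  refine Relation.ReflTransGen.lift (fun r => (r.1, c * r.2)) ?_ p q h
  rintro r s ⟨hr, hs, e, hre, hse, hpos⟩
  refine ⟨hadm hr, hadm hs, e, hre, hse, ?_⟩
  calc 0 < c * c * (r.2 * G.edgeSign e * s.2) := mul_pos (mul_pos hc hc) hpos
    _ = _ := by ring

theorem reflTransGen_of_isGaugedWalk {ℓ : ℕ} {v : Fin (ℓ + 1) → V} {e : Fin ℓ → E}
    {g : Fin (ℓ + 1) → ℝ} (hg : G.IsGaugedWalk f v e g) :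
    Relation.ReflTransGen (G.GaugeStep f) (v 0, g 0) (v (Fin.last ℓ), g (Fin.last ℓ)) := by
  obtain ⟨hstep, hadm⟩ := hg
  suffices ∀ i, Relation.ReflTransGen (G.GaugeStep f) (v 0, g 0) (v i, g i) from this _
  intro i
  induction i using Fin.induction with
  | zero => exact .refl
  | succ t ih => exact ih.tail ⟨hadm _, hadm _, e t, hstep t⟩

theorem exists_isGaugedWalk_of_reflTransGen {p q : V × ℝ}
    (h : Relation.ReflTransGen (G.GaugeStep f) p q) (hq : Admissible f q) :
    ∃ (ℓ : ℕ) (v : Fin (ℓ + 1) → V) (e : Fin ℓ → E) (g : Fin (ℓ + 1) → ℝ),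
      G.IsGaugedWalk f v e g ∧ v 0 = p.1 ∧ g 0 = p.2 ∧ v (Fin.last ℓ) = q.1 := by
  induction h using Relation.ReflTransGen.head_induction_on with
  | refl =>
    exact ⟨0, fun _ => q.1, Fin.elim0, fun _ => q.2, ⟨fun t => t.elim0, fun _ => hq⟩, rfl, rfl, rfl⟩
  | head hstep _ ih =>
    obtain ⟨ℓ, v, e, g, ⟨hwalk, hadm⟩, hv0, hg0, hvl⟩ := ih
    obtain ⟨hp, -, e₀, h₁, h₂, hpos⟩ := hstep
    refine ⟨ℓ + 1, Fin.cons _ v, Fin.cons e₀ e, Fin.cons _ g, ⟨fun t => ?_, fun i => ?_⟩,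
      rfl, rfl, by rw [← Fin.succ_last, Fin.cons_succ, hvl]⟩
    · cases t using Fin.cases with
      | zero => simpa [hv0, hg0] using ⟨h₁, h₂, hpos⟩
      | succ t => simpa [← Fin.succ_castSucc] using hwalk t
    · cases i using Fin.cases with
      | zero => exact hp
      | succ i => simpa using hadm i

theorem wRel_iff {x y : V} :
    G.wRel f x y ↔ ∃ ε ε', Admissible f (x, ε) ∧
      Relation.ReflTransGen (G.GaugeStep f) (x, ε) (y, ε') := by
  constructor
  · rintro (rfl | ⟨ℓ, v, e, hp, rfl, rfl⟩)
    · by_cases hx : 0 ≤ f x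
      · exact ⟨1, 1, ⟨one_ne_zero, by simpa using hx⟩, .refl⟩
      · exact ⟨-1, -1, ⟨by norm_num, by simp; linarith⟩, .refl⟩
    · obtain ⟨g, hg⟩ := exists_isGaugedWalk_of_isWPath hp
      exact ⟨g 0, _, hg.2 0, reflTransGen_of_isGaugedWalk hg⟩
  · rintro ⟨ε, ε', hε, hc⟩
    obtain ⟨ℓ, v, e, g, hg, hv0, -, hvl⟩ :=
      exists_isGaugedWalk_of_reflTransGen hc (hε.of_reflTransGen hc)
    exact Or.inr ⟨ℓ, v, e, isWPath_of_isGaugedWalk hg, hv0, hvl⟩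

theorem wRel_of_reflTransGen_of_reflTransGen {x m y : V} {α μ μ' β : ℝ}
    (hx : Admissible f (x, α)) (h₁ : Relation.ReflTransGen (G.GaugeStep f) (x, α) (m, μ))
    (h₂ : Relation.ReflTransGen (G.GaugeStep f) (m, μ') (y, β)) (hμ : 0 < μ * μ') :
    G.wRel f x y := by
  have h₂' := reflTransGen_gaugeStep_smul (div_pos_iff.2 (mul_pos_iff.1 hμ)) h₂
  rw [div_mul_cancel₀ μ (right_ne_zero_of_mul hμ.ne')] at h₂'
  exact wRel_iff.2 ⟨α, _, hx, h₁.trans h₂'⟩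

theorem wRel_symm {x y : V} (h : G.wRel f x y) : G.wRel f y x := by
  obtain ⟨ε, ε', hε, hc⟩ := wRel_iff.1 h
  exact wRel_iff.2 ⟨ε', ε, hε.of_reflTransGen hc, symm hc⟩

theorem wRel_trans {x m y : V} (hm : f m ≠ 0) (h₁ : G.wRel f x m) (h₂ : G.wRel f m y) :
    G.wRel f x y := by
  obtain ⟨α, μ, hα, h₁⟩ := wRel_iff.1 h₁
  obtain ⟨μ', β, hμ', h₂⟩ := wRel_iff.1 h₂
  have hμ := (hα.of_reflTransGen h₁).mul_pos hm
  exact wRel_of_reflTransGen_of_reflTransGen hα h₁ h₂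
    (mul_pos_of_mul_pos_of_mul_pos (mul_comm (f m) μ ▸ hμ) (hμ'.mul_pos hm))

theorem weakDomain_eq {a b : V} (ha : f a ≠ 0) (hb : f b ≠ 0) (hab : G.wRel f a b) :
    G.weakDomain f a = G.weakDomain f b := by
  ext u
  constructor
  · rintro ⟨m, hm, ham, hum⟩
    exact ⟨m, hm, wRel_trans ha (wRel_symm hab) ham, hum⟩
  · rintro ⟨m, hm, hbm, hum⟩
    exact ⟨m, hm, wRel_trans hb hab hbm, hum⟩

theorem wRel_of_mem_edge_of_eq_zero {x y z : V} {e : E} {ε ζ : ℝ} (hfx : f x = 0)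
    (hx : G.sign x e ≠ 0) (hy : G.sign y e ≠ 0) (hε : ε ≠ 0)
    (h : Relation.ReflTransGen (G.GaugeStep f) (x, ε) (z, ζ))
    (hfy : 0 ≤ f y * (ε * G.edgeSign e)) : G.wRel f y z := by
  have hy' : Admissible f (y, ε * G.edgeSign e) := ⟨mul_ne_zero hε (G.edgeSign_ne_zero e), hfy⟩
  refine wRel_iff.2 ⟨_, ζ, hy', h.head ⟨hy', ⟨hε, by simp [hfx]⟩, e, hy, hx, ?_⟩⟩
  exact (mul_self_pos.2 hy'.1).trans_eq (by ring)

end SignedHypergraph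

variable {V E : Type} [Fintype V] [Fintype E] [DecidableEq V] [DecidableEq E]

theorem stmt5_general (G : SignedHypergraph V E) (f : V → ℝ) (D D' : Set V)
    (hD : G.IsWeakNodalDomain f D) (hD' : G.IsWeakNodalDomain f D') (hne : D ≠ D')
    (x : V) (hx : x ∈ D) (hx' : x ∈ D') :
    ∀ y : V, G.Adjacent x y → y ∈ D ∪ D' := by
  rintro y ⟨e, hxe, hye⟩
  obtain ⟨w, hw, rfl⟩ := hD
  obtain ⟨w', hw', rfl⟩ := hD'
  obtain ⟨z, hz, hwz, hxz⟩ := hx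
  obtain ⟨z', hz', hwz', hxz'⟩ := hx'
  have hzz' : ¬ G.wRel f z z' := fun h => hne <| by
    rw [G.weakDomain_eq hw hz hwz, G.weakDomain_eq hw' hz' hwz', G.weakDomain_eq hz hz' h]
  have hfx : f x = 0 := by
    by_contra hfx
    exact hzz' (G.wRel_trans hfx (G.wRel_symm hxz) hxz')
  obtain ⟨ε, ζ, hε, hxz⟩ := G.wRel_iff.1 hxz
  obtain ⟨ε', ζ', hε', hxz'⟩ := G.wRel_iff.1 hxz'
  by_cases hy : 0 ≤ f y * (ε * G.edgeSign e)
  · exact Or.inl ⟨z, hz, hwz, G.wRel_of_mem_edge_of_eq_zero hfx hxe hye hε.1 hxz hy⟩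
  by_cases hy' : 0 ≤ f y * (ε' * G.edgeSign e)
  · exact Or.inr ⟨z', hz', hwz', G.wRel_of_mem_edge_of_eq_zero hfx hxe hye hε'.1 hxz' hy'⟩
  have hεε' : 0 < ε * ε' := mul_pos_of_mul_pos_of_mul_pos (b := -(f y * G.edgeSign e))
    (by linarith) (by linarith)
  exact absurd (G.wRel_of_reflTransGen_of_reflTransGen (hε.of_reflTransGen hxz) (symm hxz) hxz'
    hεε') hzz'

theorem stmt5 (G : SignedHypergraph V E) (f : V → ℝ) (hf : f ≠ 0) (D D' : Set V)
    (hD : G.IsWeakNodalDomain f D) (hD' : G.IsWeakNodalDomain f D') (hne : D ≠ D')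
    (x : V) (hx : x ∈ D) (hx' : x ∈ D') :
    ∀ y : V, G.Adjacent x y → y ∈ D ∪ D' :=
  stmt5_general G f D D' hD hD' hne x hx hx'
end
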